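/- arXiv:1407.6967 — 5 statements merged into one kernel-verified Lean document; each statement's English description precedes it below -/
import Mathlib

section
/- Let φ : ℝ^m → ℝ^{m−n} be a smooth (C^∞) map having 0 as a regular value (i.e., Dφ_p is surjective for every p ∈ φ⁻¹(0)), and let v : ℝ^m → ℝ^m be a smooth vector field. Set N = φ⁻¹(0). Then the following are equivalent: (i) for every differentiable curve x : I → ℝ^m defined on an interval I containing 0 with x′(t) = v(x(t)) for all t ∈ I and x(0) ∈ N, one has x(t) ∈ N for all t ∈ I with t ≥ 0; (ii) (Dφ_i)_p(v(p)) = 0 for every component function φ_i of φ and every p ∈ N. -/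
open Set Metric

/-- fderiv of a component. -/
lemma comp_fderiv_pi {m k : ℕ} {φ : (Fin m → ℝ) → (Fin k → ℝ)}
    (hφ : Differentiable ℝ φ) (i : Fin k) (p w : Fin m → ℝ) :
    fderiv ℝ (fun q => φ q i) p w = fderiv ℝ φ p w i := by
  have h1 : HasFDerivAt (fun q => φ q i)
      ((ContinuousLinearMap.proj i).comp (fderiv ℝ φ p)) p :=
    ((ContinuousLinearMap.proj (R := ℝ) (φ := fun _ : Fin k => ℝ)
      i).hasFDerivAt.comp p (hφ p).hasFDerivAt : _)
  rw [h1.fderiv]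
  rfl

/-- Key local estimate: near a regular zero of `φ`, any smooth function vanishing on
`φ⁻¹ 0` is bounded by `C * ‖φ q‖`. -/
lemma key_estimate {m k : ℕ} {φ h : (Fin m → ℝ) → (Fin k → ℝ)}
    (hφ : ContDiff ℝ (⊤ : ℕ∞) φ) (hh : ContDiff ℝ (⊤ : ℕ∞) h)
    (hvanish : ∀ p, φ p = 0 → h p = 0)
    {p₀ : Fin m → ℝ} (hp₀ : φ p₀ = 0) (hsurj : Function.Surjective (fderiv ℝ φ p₀)) :
    ∃ r > 0, ∃ C : ℝ, ∀ q ∈ Metric.ball p₀ r, ‖h q‖ ≤ C * ‖φ q‖ := by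
  classical
  set A : (Fin m → ℝ) →L[ℝ] (Fin k → ℝ) := fderiv ℝ φ p₀ with hAdef
  have hA : A.range = ⊤ := LinearMap.range_eq_top.2 hsurj
  obtain ⟨K, hKcompl⟩ := Submodule.exists_isCompl (A.ker)
  set gL : (Fin m → ℝ) →ₗ[ℝ] ↥(A.ker) :=
    (A.ker).projectionOnto K hKcompl with hgLdef
  set g : (Fin m → ℝ) →L[ℝ] ↥(A.ker) := LinearMap.toContinuousLinearMap gL with hgdef
  have hgcoe : ∀ x, g x = gL x := fun x => rfl
  have hgrange : g.range = ⊤ := by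
    rw [LinearMap.range_eq_top]
    intro y
    have := LinearMap.range_eq_top.1 (Submodule.range_projectionOnto hKcompl) y
    exact this
  have hgker : g.ker = K := by
    have : LinearMap.ker gL = K := Submodule.ker_projectionOnto hKcompl
    rw [← this]
    ext x
    simp [LinearMap.mem_ker, hgcoe]
  have hcompl : IsCompl (A.ker) (g.ker) := hgker ▸ hKcompl
  set e : (Fin m → ℝ) ≃L[ℝ] (Fin k → ℝ) × ↥(A.ker) :=
    ContinuousLinearMap.equivProdOfSurjectiveOfIsCompl A g hA hgrange hcompl with hedef
  set Φ : (Fin m → ℝ) → (Fin k → ℝ) × ↥(A.ker) := fun q => (φ q, g q) with hΦdef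
  have hstrictφ : HasStrictFDerivAt φ A p₀ :=
    hφ.contDiffAt.hasStrictFDerivAt (by simp)
  have hΦ : HasStrictFDerivAt Φ (e : (Fin m → ℝ) →L[ℝ] (Fin k → ℝ) × ↥(A.ker)) p₀ := by
    have h1 : HasStrictFDerivAt Φ (A.prod g) p₀ := HasStrictFDerivAt.prodMk hstrictφ g.hasStrictFDerivAt
    have h2 : (e : (Fin m → ℝ) →L[ℝ] (Fin k → ℝ) × ↥(A.ker)) = A.prod g := by
      ext x <;> rfl
    rw [h2]; exact h1
  set Ψ := HasStrictFDerivAt.toOpenPartialHomeomorph Φ hΦ with hΨdef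
  set inv := HasStrictFDerivAt.localInverse Φ e p₀ hΦ with hinvdef
  have hinv_eq : inv = Ψ.symm := rfl
  have hΨcoe : (Ψ : (Fin m → ℝ) → (Fin k → ℝ) × ↥(A.ker)) = Φ :=
    HasStrictFDerivAt.toOpenPartialHomeomorph_coe hΦ
  have hinvp : inv (Φ p₀) = p₀ := HasStrictFDerivAt.localInverse_apply_image hΦ
  have hinvstrict : HasStrictFDerivAt inv
      (e.symm : (Fin k → ℝ) × ↥(A.ker) →L[ℝ] (Fin m → ℝ)) (Φ p₀) :=
    HasStrictFDerivAt.to_localInverse hΦ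
  obtain ⟨K₂, s₂, hs₂, hlip₂⟩ := HasStrictFDerivAt.exists_lipschitzOnWith hinvstrict
  have hstricth : HasStrictFDerivAt h (fderiv ℝ h p₀) p₀ :=
    hh.contDiffAt.hasStrictFDerivAt (by simp)
  obtain ⟨K₁, s₁, hs₁, hlip₁⟩ := HasStrictFDerivAt.exists_lipschitzOnWith hstricth
  -- target neighborhood data
  have htarget : Ψ.target ∈ nhds (Φ p₀) :=
    Ψ.open_target.mem_nhds (HasStrictFDerivAt.image_mem_toOpenPartialHomeomorph_target hΦ)
  have hinvcont : ContinuousAt inv (Φ p₀) := HasStrictFDerivAt.localInverse_continuousAt hΦ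
  have hpre : inv ⁻¹' s₁ ∈ nhds (Φ p₀) := hinvcont.preimage_mem_nhds (by rw [hinvp]; exact hs₁)
  have ht : s₂ ∩ Ψ.target ∩ inv ⁻¹' s₁ ∈ nhds (Φ p₀) :=
    Filter.inter_mem (Filter.inter_mem hs₂ htarget) hpre
  obtain ⟨ρ, hρ, hball⟩ := Metric.mem_nhds_iff.1 ht
  have hΦc : ContinuousAt Φ p₀ :=
    ((hφ.continuous.continuousAt).prodMk (g.continuous.continuousAt))
  have E1 : ∀ᶠ q in nhds p₀, q ∈ s₁ := hs₁
  have E2 : ∀ᶠ q in nhds p₀, inv (Φ q) = q := HasStrictFDerivAt.eventually_left_inverse hΦ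
  have E3 : ∀ᶠ q in nhds p₀, Φ q ∈ Metric.ball (Φ p₀) ρ :=
    hΦc (Metric.ball_mem_nhds _ hρ)
  have main : ∀ᶠ q in nhds p₀, ‖h q‖ ≤ ((K₁ : ℝ) * K₂) * ‖φ q‖ := by
    filter_upwards [E1, E2, E3] with q h1 h2 h3
    set z : (Fin k → ℝ) × ↥(A.ker) := ((0 : Fin k → ℝ), g q) with hzdef
    have hΦp₀ : Φ p₀ = ((0 : Fin k → ℝ), g p₀) := by
      simp [hΦdef, hp₀]
    have hzball : z ∈ Metric.ball (Φ p₀) ρ := by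
      rw [Metric.mem_ball] at h3 ⊢
      have : dist z (Φ p₀) ≤ dist (Φ q) (Φ p₀) := by
        rw [hΦp₀, Prod.dist_eq, Prod.dist_eq]
        simp only [dist_self]
        exact max_le (le_max_of_le_left (by simp [hzdef])) (le_max_right _ _)
      exact lt_of_le_of_lt this h3
    have hzt := hball hzball
    have hqt := hball h3
    obtain ⟨⟨hz2, hzT⟩, hzs1⟩ := hzt
    obtain ⟨⟨hq2, _⟩, _⟩ := hqt
    set q' := inv z with hq'def
    have hΦq' : Φ q' = z := by
      have := Ψ.right_inv hzT
      rw [hΨcoe] at this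
      exact this
    have hφq' : φ q' = 0 := congrArg Prod.fst hΦq'
    have hhq' : h q' = 0 := hvanish q' hφq'
    have hq's1 : q' ∈ s₁ := hzs1
    calc ‖h q‖ = dist (h q) (h q') := by rw [hhq', dist_zero_right]
      _ ≤ (K₁ : ℝ) * dist q q' := hlip₁.dist_le_mul q h1 q' hq's1
      _ = (K₁ : ℝ) * dist (inv (Φ q)) (inv z) := by rw [h2]
      _ ≤ (K₁ : ℝ) * ((K₂ : ℝ) * dist (Φ q) z) := by
          gcongr
          · exact hlip₂.dist_le_mul _ hq2 _ hz2
      _ = ((K₁ : ℝ) * K₂) * ‖φ q‖ := by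
          rw [mul_assoc]
          congr 2
          rw [Prod.dist_eq]
          simp [hzdef, hΦdef, dist_eq_norm]
  obtain ⟨r, hr, hrball⟩ := Metric.eventually_nhds_iff_ball.1 main
  exact ⟨r, hr, (K₁ : ℝ) * K₂, hrball⟩


/-- Let `φ : ℝ^m → ℝ^(m-n)` be smooth with `0` a regular value
(`Dφ_p` surjective at every `p ∈ N := φ⁻¹(0)`), and let `v` be a smooth vector field
on `ℝ^m`.  Then `N` is forward invariant under `v` (every solution curve of
`x' = v(x)` defined on an interval containing `0` and starting in `N` stays in `N`
for forward time) if and only if `(Dφᵢ)_p (v p) = 0` for every component `φᵢ` and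
every `p ∈ N`. -/
theorem stmt_1 (m n : ℕ) (φ : (Fin m → ℝ) → (Fin (m - n) → ℝ))
    (v : (Fin m → ℝ) → (Fin m → ℝ))
    (hφ : ContDiff ℝ (⊤ : ℕ∞) φ) (hv : ContDiff ℝ (⊤ : ℕ∞) v)
    (hreg : ∀ p, φ p = 0 → Function.Surjective (fderiv ℝ φ p)) :
    (∀ I : Set ℝ, I.OrdConnected → (0 : ℝ) ∈ I →
      ∀ x : ℝ → (Fin m → ℝ), (∀ t ∈ I, HasDerivAt x (v (x t)) t) →
        φ (x 0) = 0 → ∀ t ∈ I, 0 ≤ t → φ (x t) = 0) ↔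
    (∀ i : Fin (m - n), ∀ p, φ p = 0 → fderiv ℝ (fun q => φ q i) p (v p) = 0) := by
  have hφdiff : Differentiable ℝ φ := hφ.differentiable (by simp)
  constructor
  · -- invariance → tangency
    intro hs i p hp
    obtain ⟨x, hx0, ε, hε, hx⟩ :=
      ContDiffAt.exists_forall_mem_closedBall_exists_eq_forall_mem_Ioo_hasDerivAt₀ (E := Fin m → ℝ) (f := v) (x₀ := p)
        ((hv.of_le (by exact_mod_cast le_top)).contDiffAt) (0 : ℝ)
    have h0mem : (0:ℝ) ∈ Set.Ioo (0 - ε) (0 + ε) := by constructor <;> linarith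
    have hzero : ∀ t ∈ Set.Ioo (0-ε) (0+ε), 0 ≤ t → φ (x t) = 0 :=
      hs _ Set.ordConnected_Ioo h0mem x (fun t ht => hx t ht) (by rw [hx0]; exact hp)
    have hd : DifferentiableAt ℝ (fun q => φ q i) (x 0) := by
      rw [hx0]
      exact ((ContinuousLinearMap.proj (R := ℝ) (φ := fun _ : Fin (m-n) => ℝ)
        i).differentiableAt.comp p (hφdiff p) : _)
    have hxd' : HasDerivAt x (v (x 0)) 0 := hx 0 h0mem
    have hgd : HasDerivAt (fun t => φ (x t) i)
        (fderiv ℝ (fun q => φ q i) (x 0) (v (x 0))) 0 :=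
      hd.hasFDerivAt.comp_hasDerivAt 0 hxd'
    rw [hx0] at hgd
    have huniq : UniqueDiffWithinAt ℝ (Set.Ici (0:ℝ)) 0 := uniqueDiffOn_Ici 0 0 Set.self_mem_Ici
    have h1 : HasDerivWithinAt (fun t => φ (x t) i)
        (fderiv ℝ (fun q => φ q i) p (v p)) (Set.Ici 0) 0 := hgd.hasDerivWithinAt
    have h2 : HasDerivWithinAt (fun t => φ (x t) i) 0 (Set.Ici 0) 0 := by
      have hconst : (fun t => φ (x t) i) =ᶠ[nhdsWithin 0 (Set.Ici 0)] (fun _ => (0:ℝ)) := by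
        have hIoo : Set.Ioo (0-ε) (0+ε) ∈ nhds (0:ℝ) := Ioo_mem_nhds h0mem.1 h0mem.2
        filter_upwards [mem_nhdsWithin_of_mem_nhds hIoo, self_mem_nhdsWithin]
          with t ht ht'
        exact congrFun (hzero t ht ht') i
      refine (hasDerivWithinAt_const 0 _ (0:ℝ)).congr_of_eventuallyEq hconst ?_
      have : φ (x 0) = 0 := by rw [hx0]; exact hp
      exact congrFun this i
    have := (h1.derivWithin huniq).symm.trans (h2.derivWithin huniq)
    exact this
  · -- tangency → invariance
    intro htan I hI h0I x hx hx0 b hbI hb0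
    set h : (Fin m → ℝ) → (Fin (m-n) → ℝ) := fun q => fderiv ℝ φ q (v q) with hhdef
    have hhsmooth : ContDiff ℝ (⊤:ℕ∞) h :=
      (hφ.fderiv_right (by exact_mod_cast le_top)).clm_apply hv
    have hvan : ∀ p, φ p = 0 → h p = 0 := by
      intro p hp; funext i'
      have hcomp := comp_fderiv_pi hφdiff i' p (v p)
      have : fderiv ℝ φ p (v p) i' = 0 := by rw [← hcomp]; exact htan i' p hp
      simpa [hhdef] using this
    have hIcc : Set.Icc (0:ℝ) b ⊆ I := hI.out h0I hbI
    have hderiv : ∀ t ∈ I, HasDerivAt (fun s => φ (x s)) (h (x t)) t := fun t ht =>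
      (hφdiff (x t)).hasFDerivAt.comp_hasDerivAt t (hx t ht)
    have hcont : ∀ t ∈ I, ContinuousAt (fun s => φ (x s)) t :=
      fun t ht => (hderiv t ht).continuousAt
    set A := {s | s ∈ Set.Icc (0:ℝ) b ∧ ∀ u ∈ Set.Icc 0 s, φ (x u) = 0} with hAdef
    have h0A : (0:ℝ) ∈ A := ⟨⟨le_refl 0, hb0⟩, fun u hu => by
      have : u = 0 := le_antisymm hu.2 hu.1
      rw [this]; exact hx0⟩
    have hbdd : BddAbove A := ⟨b, fun s hs => hs.1.2⟩
    set c := sSup A with hcdef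
    have hc0 : 0 ≤ c := le_csSup hbdd h0A
    have hcb : c ≤ b := csSup_le ⟨0, h0A⟩ fun s hs => hs.1.2
    have hcI : Set.Icc (0:ℝ) c ⊆ I := fun u hu => hIcc ⟨hu.1, hu.2.trans hcb⟩
    have hIco : ∀ u ∈ Set.Ico (0:ℝ) c, φ (x u) = 0 := by
      intro u hu
      obtain ⟨s, hsA, hus⟩ := exists_lt_of_lt_csSup ⟨0, h0A⟩ hu.2
      exact hsA.2 u ⟨hu.1, le_of_lt hus⟩
    have hgc : φ (x c) = 0 := by
      rcases eq_or_lt_of_le hc0 with hc|hc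
      · rw [← hc]; exact hx0
      · have hmem : c ∈ closure (Set.Ico 0 c) := by
          rw [closure_Ico (ne_of_lt hc)]; exact ⟨hc0, le_refl c⟩
        have hne : (nhdsWithin c (Set.Ico 0 c)).NeBot :=
          mem_closure_iff_nhdsWithin_neBot.1 hmem
        have ht1 : Filter.Tendsto (fun s => φ (x s)) (nhdsWithin c (Set.Ico 0 c))
            (nhds (φ (x c))) :=
          ((hcont c (hcI ⟨hc0, le_refl c⟩)).continuousWithinAt).tendsto
        have ht2 : Filter.Tendsto (fun s => φ (x s)) (nhdsWithin c (Set.Ico 0 c)) (nhds 0) := by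
          apply Filter.Tendsto.congr' _ tendsto_const_nhds
          filter_upwards [self_mem_nhdsWithin] with u hu using (hIco u hu).symm
        exact tendsto_nhds_unique ht1 ht2
    have hcA : c ∈ A := ⟨⟨hc0, hcb⟩, fun u hu => by
      rcases eq_or_lt_of_le hu.2 with h'|h'
      · rw [h']; exact hgc
      · exact hIco u ⟨hu.1, h'⟩⟩
    rcases eq_or_lt_of_le hcb with hcb'|hcb'
    · exact hcA.2 b ⟨hb0, le_of_eq hcb'.symm⟩
    · exfalso
      obtain ⟨r, hr, C, hC⟩ := key_estimate hφ hhsmooth hvan hgc (hreg _ hgc)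
      have hxc : ContinuousAt x c := (hx c (hcI ⟨hc0, le_refl c⟩)).continuousAt
      obtain ⟨δ, hδ, hδball⟩ := Metric.mem_nhds_iff.1 (hxc (Metric.ball_mem_nhds _ hr))
      set d := min (c + δ/2) b with hddef
      have hcd : c < d := lt_min (by linarith) hcb'
      have hdb : d ≤ b := min_le_right _ _
      have hsubI : Set.Icc c d ⊆ I := fun u hu => hIcc ⟨hc0.trans hu.1, hu.2.trans hdb⟩
      have hballx : ∀ u ∈ Set.Icc c d, x u ∈ Metric.ball (x c) r := by
        intro u hu
        apply hδball
        rw [Metric.mem_ball, Real.dist_eq, abs_sub_lt_iff]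
        have hud : u ≤ c + δ/2 := hu.2.trans (min_le_left _ _)
        constructor
        · linarith
        · linarith [hu.1]
      have hg0 : ∀ u ∈ Set.Icc c d, φ (x u) = 0 := by
        intro u hu
        have key := norm_le_gronwallBound_of_norm_deriv_right_le
          (f := fun s => φ (x s)) (f' := fun s => h (x s)) (δ := 0) (K := C) (ε := 0)
          (a := c) (b := d)
          (fun t ht => ((hcont t (hsubI ht)).continuousWithinAt))
          (fun t ht => ((hderiv t (hsubI ⟨ht.1, le_of_lt ht.2⟩)).hasDerivWithinAt))
          (by show ‖φ (x c)‖ ≤ 0; rw [hgc]; simp)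
          (fun t ht => by
            have := hC (x t) (hballx t ⟨ht.1, le_of_lt ht.2⟩)
            simpa using this)
        have hle := key u hu
        rw [gronwallBound_ε0] at hle
        simp only [zero_mul] at hle
        exact norm_le_zero_iff.1 hle
      have hdA : d ∈ A := ⟨⟨hc0.trans (le_of_lt hcd), hdb⟩, fun u hu => by
        rcases le_total u c with h'|h'
        · exact hcA.2 u ⟨hu.1, h'⟩
        · exact hg0 u ⟨h', hu.2⟩⟩
      exact absurd (le_csSup hbdd hdA) (not_le.2 hcd)
end

section
/- Let q = (x₁, x₂, x₃, w₁, w₂) ∈ ℝ⁵ satisfy x₁² + x₂² − 1 = 0 and x₁ cos x₃ + x₂ sin x₃ + x₂ w₁ = 0, and define φ(q) = x₁(sin x₃ + w₁) − x₂ cos x₃ and ϕ(q) = x₁ sin x₃ − x₂ cos x₃. Then φ(q)² = 1 + 2 w₁ sin x₃ + w₁² and ϕ(q)² · (1 + 2 w₁ sin x₃ + w₁²) = (1 + w₁ sin x₃)². Consequently, if w₁² + w₂² < 1 then φ(q) ≠ 0 and ϕ(q) ≠ 0. -/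
/-- With `φ = x₁(sin x₃ + w₁) − x₂ cos x₃` and
`ϕ = x₁ sin x₃ − x₂ cos x₃`, on the set `Γ*` one has
`φ² = 1 + 2w₁ sin x₃ + w₁²` and `ϕ²(1 + 2w₁ sin x₃ + w₁²) = (1 + w₁ sin x₃)²`;
consequently if `w₁² + w₂² < 1` then `φ ≠ 0` and `ϕ ≠ 0`. -/
theorem stmt_14 (x₁ x₂ x₃ w₁ w₂ : ℝ)
    (h1 : x₁ ^ 2 + x₂ ^ 2 - 1 = 0)
    (h2 : x₁ * Real.cos x₃ + x₂ * Real.sin x₃ + x₂ * w₁ = 0) :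
    (x₁ * (Real.sin x₃ + w₁) - x₂ * Real.cos x₃) ^ 2
        = 1 + 2 * w₁ * Real.sin x₃ + w₁ ^ 2 ∧
    (x₁ * Real.sin x₃ - x₂ * Real.cos x₃) ^ 2 * (1 + 2 * w₁ * Real.sin x₃ + w₁ ^ 2)
        = (1 + w₁ * Real.sin x₃) ^ 2 ∧
    (w₁ ^ 2 + w₂ ^ 2 < 1 →
      x₁ * (Real.sin x₃ + w₁) - x₂ * Real.cos x₃ ≠ 0 ∧
      x₁ * Real.sin x₃ - x₂ * Real.cos x₃ ≠ 0) := by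
  have hpy := Real.sin_sq_add_cos_sq x₃
  set s := Real.sin x₃
  set c := Real.cos x₃
  have hφ : (x₁ * (s + w₁) - x₂ * c) ^ 2 = 1 + 2 * w₁ * s + w₁ ^ 2 := by
    nlinarith [sq_nonneg (x₁ * c + x₂ * (s + w₁))]
  have hA : x₁ * (x₁ * (s + w₁) - x₂ * c) = s + w₁ := by nlinarith []
  have hB : x₂ * (x₁ * (s + w₁) - x₂ * c) = -c := by nlinarith []
  have hprod : (x₁ * s - x₂ * c) * (x₁ * (s + w₁) - x₂ * c) = 1 + w₁ * s := by
    linear_combination s * hA - c * hB + hpy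
  have hϕ : (x₁ * s - x₂ * c) ^ 2 * (1 + 2 * w₁ * s + w₁ ^ 2)
      = (1 + w₁ * s) ^ 2 := by
    calc (x₁ * s - x₂ * c) ^ 2 * (1 + 2 * w₁ * s + w₁ ^ 2)
        = ((x₁ * s - x₂ * c) * (x₁ * (s + w₁) - x₂ * c)) ^ 2 := by rw [← hφ]; ring
      _ = (1 + w₁ * s) ^ 2 := by rw [hprod]
  refine ⟨hφ, hϕ, fun hw => ?_⟩
  have hs : s ^ 2 + c ^ 2 = 1 := hpy
  have hs1 : s ^ 2 ≤ 1 := by nlinarith [sq_nonneg c]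
  have hpos : 0 < 1 + 2 * w₁ * s + w₁ ^ 2 := by
    nlinarith [sq_nonneg (w₁ + s), sq_nonneg (w₁ - s), sq_nonneg w₂, sq_nonneg c]
  constructor
  · intro h0
    rw [h0] at hφ
    simp at hφ
    linarith
  · intro h0
    rw [h0] at hϕ
    have : (1 + w₁ * s) ^ 2 = 0 := by linarith [hϕ]
    have h1s : 1 + w₁ * s = 0 := by
      exact pow_eq_zero_iff (by norm_num) |>.mp this
    nlinarith [sq_nonneg (w₁ - s), sq_nonneg (w₁ + s), sq_nonneg w₂, sq_nonneg c]
end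

section
/- Define γ : ℝ⁵ → ℝ² by γ₁(q) = x₁² + x₂² − 1 and γ₂(q) = x₁ cos x₃ + x₂ sin x₃ + x₂ w₁, where q = (x₁, x₂, x₃, w₁, w₂). Then 0 is a regular value of γ on the set where w₁² + w₂² < 1: for every q with γ(q) = 0 and w₁² + w₂² < 1, the derivative Dγ_q : ℝ⁵ → ℝ² is surjective. -/
/-- The constraint map `γ : ℝ⁵ → ℝ²`,
`γ(q) = (x₁² + x₂² − 1, x₁ cos x₃ + x₂ sin x₃ + x₂ w₁)`, with coordinates
`q = (x₁, x₂, x₃, w₁, w₂) = (q 0, q 1, q 2, q 3, q 4)`. -/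
noncomputable def exGam : (Fin 5 → ℝ) → (Fin 2 → ℝ) :=
  fun q => ![q 0 ^ 2 + q 1 ^ 2 - 1,
    q 0 * Real.cos (q 2) + q 1 * Real.sin (q 2) + q 1 * q 3]

/-- The coordinate projection `ℝ⁵ → ℝ` as a continuous linear map. -/
noncomputable def pr (i : Fin 5) : (Fin 5 → ℝ) →L[ℝ] ℝ := ContinuousLinearMap.proj i

/-- The explicit derivative of `exGam` at `q`. -/
noncomputable def myL (q : Fin 5 → ℝ) : (Fin 5 → ℝ) →L[ℝ] (Fin 2 → ℝ) :=
  ContinuousLinearMap.pi ![ (2 * q 0) • pr 0 + (2 * q 1) • pr 1,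
    Real.cos (q 2) • pr 0 + (Real.sin (q 2) + q 3) • pr 1 +
      (-(q 0) * Real.sin (q 2) + q 1 * Real.cos (q 2)) • pr 2 + q 1 • pr 3 ]

lemma hL (q : Fin 5 → ℝ) : HasFDerivAt exGam (myL q) q := by
  have h0 : HasFDerivAt (fun q : Fin 5 → ℝ => q 0 ^ 2 + q 1 ^ 2 - 1)
      ((2 * q 0) • pr 0 + (2 * q 1) • pr 1) q := by
    have hfun : (fun q : Fin 5 → ℝ => q 0 ^ 2 + q 1 ^ 2 - 1)
        = (fun x : Fin 5 → ℝ => (pr 0) x * (pr 0) x + (pr 1) x * (pr 1) x - 1) := by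
      funext x; simp [pr]; ring
    rw [hfun]
    refine HasFDerivAt.congr_fderiv ((((((pr 0).hasFDerivAt (x := q)).mul ((pr 0).hasFDerivAt (x := q)))).add
      ((((pr 1).hasFDerivAt (x := q)).mul ((pr 1).hasFDerivAt (x := q))))).sub_const 1) ?_
    ext v
    simp [pr]
    ring
  have h1 : HasFDerivAt (fun q : Fin 5 → ℝ =>
      q 0 * Real.cos (q 2) + q 1 * Real.sin (q 2) + q 1 * q 3)
      (Real.cos (q 2) • pr 0 + (Real.sin (q 2) + q 3) • pr 1 +
        (-(q 0) * Real.sin (q 2) + q 1 * Real.cos (q 2)) • pr 2 + q 1 • pr 3) q := by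
    have hfun : (fun q : Fin 5 → ℝ =>
        q 0 * Real.cos (q 2) + q 1 * Real.sin (q 2) + q 1 * q 3)
        = (fun x : Fin 5 → ℝ => (pr 0) x * Real.cos ((pr 2) x)
            + (pr 1) x * Real.sin ((pr 2) x) + (pr 1) x * (pr 3) x) := by
      funext x; simp [pr]
    rw [hfun]
    refine HasFDerivAt.congr_fderiv (((((pr 0).hasFDerivAt (x := q)).mul ((pr 2).hasFDerivAt (x := q)).cos).add
      (((pr 1).hasFDerivAt (x := q)).mul ((pr 2).hasFDerivAt (x := q)).sin)).add
      (((pr 1).hasFDerivAt (x := q)).mul ((pr 3).hasFDerivAt (x := q)))) ?_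
    ext v
    simp [pr]
    ring
  rw [hasFDerivAt_pi']
  intro i
  fin_cases i
  · simpa [myL, exGam] using h0
  · simpa [myL, exGam] using h1

/-- `0` is a regular value of `γ` on the region `w₁² + w₂² < 1`:
at every `q` with `γ(q) = 0` and `w₁² + w₂² < 1`, `Dγ_q : ℝ⁵ → ℝ²` is surjective. -/
theorem stmt_15 (q : Fin 5 → ℝ) (hq : exGam q = 0)
    (hw : (q 3) ^ 2 + (q 4) ^ 2 < 1) :
    Function.Surjective (fderiv ℝ exGam q) := by
  rw [(hL q).fderiv]
  have hA : q 0 ^ 2 + q 1 ^ 2 = 1 := by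
    have := congrFun hq 0; simp [exGam] at this; linarith
  have hB : q 0 * Real.cos (q 2) + q 1 * Real.sin (q 2) + q 1 * q 3 = 0 := by
    have := congrFun hq 1; simpa [exGam] using this
  intro c
  by_cases h1z : q 1 = 0
  · -- q0 ≠ 0, cos q2 = 0, sin q2 = ±1, sin + w1 ≠ 0
    have h0 : q 0 ≠ 0 := by
      intro h; rw [h, h1z] at hA; norm_num at hA
    have hcos : Real.cos (q 2) = 0 := by
      rw [h1z] at hB; simp at hB; rcases hB with h | h
      · exact absurd h h0
      · exact h
    have hsin : Real.sin (q 2) ^ 2 = 1 := by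
      have := Real.sin_sq_add_cos_sq (q 2); rw [hcos] at this; nlinarith
    have hd : Real.sin (q 2) + q 3 ≠ 0 := by
      intro h
      have hq3 : q 3 = -Real.sin (q 2) := by linarith
      have : q 3 ^ 2 = 1 := by rw [hq3]; nlinarith
      nlinarith [sq_nonneg (q 4)]
    use ![c 0 / (2 * q 0), c 1 / (Real.sin (q 2) + q 3), 0, 0, 0]
    funext i
    fin_cases i
    · simp [myL, pr, h1z]
      field_simp
    · simp [myL, pr, h1z, hcos]
      field_simp
  · by_cases h0z : q 0 = 0
    · use ![0, c 0 / (2 * q 1), 0,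
        (c 1 - (Real.sin (q 2) + q 3) * (c 0 / (2 * q 1))) / q 1, 0]
      funext i
      fin_cases i
      · simp [myL, pr, h0z]
        field_simp
      · simp [myL, pr, h0z]
        field_simp
        ring
    · use ![c 0 / (2 * q 0), 0, 0,
        (c 1 - Real.cos (q 2) * (c 0 / (2 * q 0))) / q 1, 0]
      funext i
      fin_cases i
      · simp [myL, pr]
        field_simp
      · simp [myL, pr]
        field_simp
        ring
end

section
/- Define γ : ℝ⁵ → ℝ² by γ₁(q) = x₁² + x₂² − 1 and γ₂(q) = x₁ cos x₃ + x₂ sin x₃ + x₂ w₁, where q = (x₁, x₂, x₃, w₁, w₂), and set φ(q) = x₁(sin x₃ + w₁) − x₂ cos x₃ and ϕ(q) = x₁ sin x₃ − x₂ cos x₃. Define the vector fields v₁(q) = (0, 0, 0, 0, 1), v₂(q) = (x₂², −x₁x₂, 0, φ(q), 0), v₃(q) = (−x₂ ϕ(q), x₁ ϕ(q), φ(q), 0, 0). Then for every q ∈ ℝ⁵ and i ∈ {1, 2, 3}, Dγ_q(v_i(q)) = 0 ∈ ℝ². Moreover, for every q with γ(q) = 0 and w₁² + w₂² < 1, the vectors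 v₁(q), v₂(q), v₃(q) are linearly independent. -/
/-- `φ(q) = x₁(sin x₃ + w₁) − x₂ cos x₃`. -/
noncomputable def phiU (q : Fin 5 → ℝ) : ℝ :=
  q 0 * (Real.sin (q 2) + q 3) - q 1 * Real.cos (q 2)

/-- `ϕ(q) = x₁ sin x₃ − x₂ cos x₃`. -/
noncomputable def varphiU (q : Fin 5 → ℝ) : ℝ :=
  q 0 * Real.sin (q 2) - q 1 * Real.cos (q 2)

/-- `v₁(q) = (0, 0, 0, 0, 1)`. -/
noncomputable def exV1 : (Fin 5 → ℝ) → (Fin 5 → ℝ) := fun _ => ![0, 0, 0, 0, 1]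

/-- `v₂(q) = (x₂², −x₁x₂, 0, φ(q), 0)`. -/
noncomputable def exV2 : (Fin 5 → ℝ) → (Fin 5 → ℝ) :=
  fun q => ![(q 1) ^ 2, -(q 0) * q 1, 0, phiU q, 0]

/-- `v₃(q) = (−x₂ ϕ(q), x₁ ϕ(q), φ(q), 0, 0)`. -/
noncomputable def exV3 : (Fin 5 → ℝ) → (Fin 5 → ℝ) :=
  fun q => ![-(q 1) * varphiU q, q 0 * varphiU q, phiU q, 0, 0]

open ContinuousLinearMap in
lemma exGam_fderiv_apply (q v : Fin 5 → ℝ) :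
    fderiv ℝ exGam q v = ![2 * q 0 * v 0 + 2 * q 1 * v 1,
      Real.cos (q 2) * v 0 + (Real.sin (q 2) + q 3) * v 1
        + (q 1 * Real.cos (q 2) - q 0 * Real.sin (q 2)) * v 2 + q 1 * v 3] := by
  set P : Fin 5 → ((Fin 5 → ℝ) →L[ℝ] ℝ) := fun i => ContinuousLinearMap.proj i with hP
  set D0 : (Fin 5 → ℝ) →L[ℝ] ℝ := (2 * q 0) • P 0 + (2 * q 1) • P 1 with hD0
  set D1 : (Fin 5 → ℝ) →L[ℝ] ℝ := Real.cos (q 2) • P 0 + (Real.sin (q 2) + q 3) • P 1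
      + (q 1 * Real.cos (q 2) - q 0 * Real.sin (q 2)) • P 2 + (q 1) • P 3 with hD1
  have h0 : HasFDerivAt (fun x : Fin 5 → ℝ => x 0 ^ 2 + x 1 ^ 2 - 1) D0 q := by
    have e : (fun x : Fin 5 → ℝ => x 0 ^ 2 + x 1 ^ 2 - 1)
        = (fun x : Fin 5 → ℝ => x 0 * x 0 + x 1 * x 1 - 1) := by funext x; ring
    rw [e]
    refine ((((hasFDerivAt_apply (𝕜 := ℝ) 0 q).mul (hasFDerivAt_apply (𝕜 := ℝ) 0 q)).add
      ((hasFDerivAt_apply (𝕜 := ℝ) 1 q).mul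
        (hasFDerivAt_apply (𝕜 := ℝ) 1 q))).sub_const 1).congr_fderiv ?_
    ext w; simp [hD0, hP]; ring
  have h1 : HasFDerivAt (fun x : Fin 5 → ℝ =>
      x 0 * Real.cos (x 2) + x 1 * Real.sin (x 2) + x 1 * x 3) D1 q := by
    refine ((((hasFDerivAt_apply (𝕜 := ℝ) 0 q).mul
        ((hasFDerivAt_apply (𝕜 := ℝ) 2 q).cos)).add
      ((hasFDerivAt_apply (𝕜 := ℝ) 1 q).mul
        ((hasFDerivAt_apply (𝕜 := ℝ) 2 q).sin))).add
      ((hasFDerivAt_apply (𝕜 := ℝ) 1 q).mul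
        (hasFDerivAt_apply (𝕜 := ℝ) 3 q))).congr_fderiv ?_
    ext w; simp [hD1, hP]; ring
  have H : HasFDerivAt exGam (ContinuousLinearMap.pi ![D0, D1]) q := by
    apply hasFDerivAt_pi''
    intro i
    fin_cases i
    · simpa [exGam, ContinuousLinearMap.proj_pi] using h0
    · simpa [exGam, ContinuousLinearMap.proj_pi] using h1
  rw [H.fderiv]
  funext i
  fin_cases i <;> simp [hD0, hD1, hP]

/-- `Dγ_q (vᵢ q) = 0` for every `q ∈ ℝ⁵` and `i ∈ {1,2,3}`, and
the vectors `v₁ q, v₂ q, v₃ q` are linearly independent at every `q` with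
`γ(q) = 0` and `w₁² + w₂² < 1`. -/
theorem stmt_16 :
    (∀ q : Fin 5 → ℝ,
      fderiv ℝ exGam q (exV1 q) = 0 ∧
      fderiv ℝ exGam q (exV2 q) = 0 ∧
      fderiv ℝ exGam q (exV3 q) = 0) ∧
    (∀ q : Fin 5 → ℝ, exGam q = 0 → (q 3) ^ 2 + (q 4) ^ 2 < 1 →
      LinearIndependent ℝ ![exV1 q, exV2 q, exV3 q]) := by
  constructor
  · intro q
    refine ⟨?_, ?_, ?_⟩ <;>
    · rw [exGam_fderiv_apply]
      funext i
      fin_cases i <;> simp [exV1, exV2, exV3, phiU, varphiU] <;> ring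
  · intro q hγ hw
    have h1 : q 0 ^ 2 + q 1 ^ 2 - 1 = 0 := by
      have := congrFun hγ 0; simpa [exGam] using this
    have h2 : q 0 * Real.cos (q 2) + q 1 * Real.sin (q 2) + q 1 * q 3 = 0 := by
      have := congrFun hγ 1; simpa [exGam] using this
    have hsc : Real.sin (q 2) ^ 2 + Real.cos (q 2) ^ 2 = 1 := Real.sin_sq_add_cos_sq _
    have hq3 : q 3 ^ 2 < 1 := lt_of_le_of_lt (by nlinarith [sq_nonneg (q 4)]) hw
    have hphi : phiU q ≠ 0 := by
      intro h
      rw [phiU] at h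
      have e1 : (q 0 * Real.cos (q 2) + q 1 * Real.sin (q 2)) ^ 2 = q 1 ^ 2 * q 3 ^ 2 := by
        linear_combination (q 0 * Real.cos (q 2) + q 1 * Real.sin (q 2) - q 1 * q 3) * h2
      have e2 : (q 0 * Real.sin (q 2) - q 1 * Real.cos (q 2)) ^ 2 = q 0 ^ 2 * q 3 ^ 2 := by
        linear_combination (q 0 * Real.sin (q 2) - q 1 * Real.cos (q 2) - q 0 * q 3) * h
      have hcontra : q 3 ^ 2 = 1 := by
        linear_combination (- e1) - e2
          + (Real.sin (q 2) ^ 2 + Real.cos (q 2) ^ 2 - q 3 ^ 2) * h1 + hsc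
      linarith
    rw [Fintype.linearIndependent_iff]
    intro g hg
    have e4 := congrFun hg 4
    have e2 := congrFun hg 2
    have e3 := congrFun hg 3
    simp [Fin.sum_univ_three, exV1, exV2, exV3, Matrix.vecHead, Matrix.vecTail] at e4 e2 e3
    have hg0 : g 0 = 0 := by simpa using e4
    have hg2 : g 2 = 0 := by
      rcases e2 with h | h
      · exact h
      · exact absurd h hphi
    have hg1 : g 1 = 0 := by
      rcases e3 with h | h
      · exact h
      · exact absurd h hphi
    intro i
    fin_cases i
    · exact hg0
    · exact hg1
    · exact hg2
end

section
/- Let q = (x₁, x₂, x₃, w₁, w₂) ∈ ℝ⁵, set φ(q) = x₁(sin x₃ + w₁) − x₂ cos x₃ and ϕ(q) = x₁ sin x₃ − x₂ cos x₃, and consider the 5×5 real matrix whose columns, in order, are (0,0,0,0,1), (x₂², −x₁x₂, 0, φ(q), 0), (−x₂ϕ(q), x₁ϕ(q), φ(q), 0, 0), (0,0,1,0,0), and (−sin x₃, cos x₃, 0, 0, 0). Then the determinant of this matrix equals φ(q)·ϕ(q)² for every q ∈ ℝ⁵. Consequently, at every q with γ(q) = 0 and w₁² + w₂² < 1 (where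 φ(q) ≠ 0 and ϕ(q) ≠ 0), these five vectors form a basis of ℝ⁵. -/
/-- The five columns `(0,0,0,0,1)`, `(x₂², −x₁x₂, 0, φ, 0)`,
`(−x₂ϕ, x₁ϕ, φ, 0, 0)`, `(0,0,1,0,0)`, `(−sin x₃, cos x₃, 0, 0, 0)`. -/
noncomputable def exCols (q : Fin 5 → ℝ) : Fin 5 → (Fin 5 → ℝ) :=
  ![![0, 0, 0, 0, 1],
    ![(q 1) ^ 2, -(q 0) * q 1, 0, phiU q, 0],
    ![-(q 1) * varphiU q, q 0 * varphiU q, phiU q, 0, 0],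
    ![0, 0, 1, 0, 0],
    ![-(Real.sin (q 2)), Real.cos (q 2), 0, 0, 0]]

/-- The 5×5 matrix whose columns are `exCols q`. -/
noncomputable def exMat (q : Fin 5 → ℝ) : Matrix (Fin 5) (Fin 5) ℝ :=
  (Matrix.of (exCols q)).transpose

theorem my_det_fin_four (A : Matrix (Fin 4) (Fin 4) ℝ) :
    A.det = A 0 0*A 1 1*A 2 2*A 3 3 - A 0 0*A 1 1*A 2 3*A 3 2 - A 0 0*A 1 2*A 2 1*A 3 3 + A 0 0*A 1 2*A 2 3*A 3 1 + A 0 0*A 1 3*A 2 1*A 3 2 - A 0 0*A 1 3*A 2 2*A 3 1 - A 0 1*A 1 0*A 2 2*A 3 3 + A 0 1*A 1 0*A 2 3*A 3 2 + A 0 1*A 1 2*A 2 0*A 3 3 - A 0 1*A 1 2*A 2 3*A 3 0 - A 0 1*A 1 3*A 2 0*A 3 2 + A 0 1*A 1 3*A 2 2*A 3 0 + A 0 2*A 1 0*A 2 1*A 3 3 - A 0 2*A 1 0*A 2 3*A 3 1 - A 0 2*A 1 1*A 2 0*A 3 3 + A 0 2*A 1 1*A 2 3*A 3 0 + A 0 2*A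 1 3*A 2 0*A 3 1 - A 0 2*A 1 3*A 2 1*A 3 0 - A 0 3*A 1 0*A 2 1*A 3 2 + A 0 3*A 1 0*A 2 2*A 3 1 + A 0 3*A 1 1*A 2 0*A 3 2 - A 0 3*A 1 1*A 2 2*A 3 0 - A 0 3*A 1 2*A 2 0*A 3 1 + A 0 3*A 1 2*A 2 1*A 3 0 := by
  rw [Matrix.det_succ_row_zero]
  simp [Fin.sum_univ_succ, Matrix.det_fin_three, Matrix.submatrix_apply, Fin.succAbove]
  ring

set_option maxRecDepth 8000 in
lemma exMat_det (q : Fin 5 → ℝ) : (exMat q).det = phiU q * (varphiU q) ^ 2 := by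
  rw [Matrix.det_succ_column_zero, Fin.sum_univ_five]
  simp only [exMat, exCols, Matrix.transpose_apply, Matrix.of_apply, Matrix.cons_val',
    Matrix.cons_val_zero, Matrix.cons_val_one, Matrix.head_cons, Matrix.cons_val_fin_one,
    Matrix.empty_val', Matrix.head_fin_const, Matrix.cons_val_two, Matrix.tail_cons,
    Matrix.cons_val_three, Matrix.cons_val_four]
  simp only [zero_mul, mul_zero, zero_add, add_zero, one_mul, mul_one]
  rw [my_det_fin_four]
  simp [Matrix.submatrix_apply, Matrix.vecHead, Matrix.vecTail, Matrix.transpose_apply,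
    Function.comp, Matrix.cons_val_succ,
    show Fin.succAbove (4:Fin 5) = Fin.castSucc from Fin.succAbove_last, show Fin.castSucc (0:Fin 4) = 0 from rfl, show Fin.castSucc (1:Fin 4) = 1 from rfl, show Fin.castSucc (2:Fin 4) = 2 from rfl, show Fin.castSucc (3:Fin 4) = 3 from rfl, show Fin.succ (0:Fin 4) = 1 from rfl, show Fin.succ (1:Fin 4) = 2 from rfl, show Fin.succ (2:Fin 4) = 3 from rfl, show Fin.succ (3:Fin 4) = 4 from rfl]
  norm_num
  unfold phiU varphiU
  ring


/-- The determinant of the matrix with the above columns equals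
`φ(q)·ϕ(q)²` for every `q`; consequently, at every `q` with `γ(q) = 0` and
`w₁² + w₂² < 1` the five columns form a basis of `ℝ⁵`. -/
theorem stmt_17 :
    (∀ q : Fin 5 → ℝ, (exMat q).det = phiU q * (varphiU q) ^ 2) ∧
    (∀ q : Fin 5 → ℝ, exGam q = 0 → (q 3) ^ 2 + (q 4) ^ 2 < 1 →
      LinearIndependent ℝ (exCols q) ∧
      Submodule.span ℝ (Set.range (exCols q)) = ⊤) := by
  refine ⟨exMat_det, fun q hγ hlt => ?_⟩
  have h1 : q 0 ^ 2 + q 1 ^ 2 - 1 = 0 := congrFun hγ 0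
  have h2 : q 0 * Real.cos (q 2) + q 1 * Real.sin (q 2) + q 1 * q 3 = 0 := congrFun hγ 1
  have hpy : Real.sin (q 2) ^ 2 + Real.cos (q 2) ^ 2 = 1 := Real.sin_sq_add_cos_sq (q 2)
  have hw : q 3 ^ 2 < 1 := by nlinarith [sq_nonneg (q 4)]
  have hphi : phiU q ≠ 0 := by
    intro h
    have hs : (Real.sin (q 2) + q 3) ^ 2 + Real.cos (q 2) ^ 2 > 0 := by
      nlinarith [sq_nonneg (Real.sin (q 2) * q 3 - 1), sq_nonneg (Real.sin (q 2) * q 3 + 1)]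
    unfold phiU at h
    nlinarith [sq_nonneg (q 0 * (Real.sin (q 2) + q 3) - q 1 * Real.cos (q 2)),
      sq_nonneg (q 0 * Real.cos (q 2) + q 1 * (Real.sin (q 2) + q 3))]
  have hvphi : varphiU q ≠ 0 := by
    intro h
    unfold varphiU at h
    have e : q 0 * Real.cos (q 2) + q 1 * Real.sin (q 2) = -(q 1 * q 3) := by linarith
    have key : (q 1 * q 3) ^ 2 =
        (q 0 ^ 2 + q 1 ^ 2) * (Real.sin (q 2) ^ 2 + Real.cos (q 2) ^ 2) -
          (q 0 * Real.sin (q 2) - q 1 * Real.cos (q 2)) ^ 2 := by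
      have h' : (q 1 * q 3) ^ 2 = (q 0 * Real.cos (q 2) + q 1 * Real.sin (q 2)) ^ 2 := by
        rw [e]; ring
      rw [h']; ring
    have hx : q 0 ^ 2 + q 1 ^ 2 = 1 := by linarith
    rw [hx, hpy] at key
    norm_num at key
    nlinarith [key, sq_nonneg (q 3), sq_nonneg (q 0), sq_nonneg (q 1), hw]
  have hdet : (Matrix.of (exCols q)).det ≠ 0 := by
    have := exMat_det q
    rw [exMat, Matrix.det_transpose] at this
    rw [this]
    positivity
  have hunit : IsUnit (Matrix.of (exCols q)) :=
    (Matrix.isUnit_iff_isUnit_det _).2 (isUnit_iff_ne_zero.2 hdet)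
  have hli : LinearIndependent ℝ (exCols q) :=
    Matrix.linearIndependent_rows_iff_isUnit.2 hunit
  refine ⟨hli, hli.span_eq_top_of_card_eq_finrank ?_⟩
  simp
end
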